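/- The mixed-pair operators annihilate via antisymmetry: for any four pairwise disjoint subsets I, J, S, T of [n], the operator ψ_{I,S}∘ψ_{J,T} + ψ_{I,J}∘ψ_{S,T} + ψ_{I,T}∘ψ_{J,S} is the zero operator on Λ{Θ_n,Ξ_n}. -/

import Mathlib

/-! Write `x_a` for left multiplication by `ξ_a` and `d_b` for `θ_b ⊙ ·`; these are the
creation and annihilation operators of the generators, so any two of them anticommute
(`ξ`'s and `θ`'s being distinct generators). Then `ψ_{A,B} = ∑ L_{ab}` with
`L_{ab} = x_a d_b + x_b d_a`, and `L_{ab} L_{ce} = -(x_a x_c d_b d_e + x_a x_e d_b d_c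
+ x_b x_c d_a d_e + x_b x_e d_a d_c)`. Each term is antisymmetric in its pair of `x`'s and in
its pair of `d`'s, so over the three pairings of `{i, j, s, t}` the twelve terms cancel
in pairs. -/

open Finset

/-- The index set for the `2n` fermionic generators `θ₁,…,θₙ,ξ₁,…,ξₙ`:
`Sum.inl i` is `θ_i`, `Sum.inr i` is `ξ_i`. -/
abbrev Gen (n : ℕ) := Fin n ⊕ Fin n

/-- The position of a generator in the fixed order `θ₁ < ⋯ < θₙ < ξ₁ < ⋯ < ξₙ`. -/
def gidx {n : ℕ} : Gen n → ℕ
  | .inl i => (i : ℕ)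
  | .inr i => n + (i : ℕ)

/-- The exterior algebra `∧{Θ_n, Ξ_n}` over `ℂ`, modeled by coefficient functions
on the basis of monomials `θ_S · ξ_T`, a monomial being indexed by a subset of the
`2n` generators. -/
abbrev ExtA (n : ℕ) := Finset (Gen n) → ℂ

/-- The basis monomial indexed by a set of generators (product taken in the fixed order). -/
noncomputable def emon {n : ℕ} (S : Finset (Gen n)) : ExtA n := fun T => if T = S then 1 else 0

/-- The generator `θ_i`. -/
noncomputable def theta {n : ℕ} (i : Fin n) : ExtA n := emon {Sum.inl i}

/-- The generator `ξ_i`. -/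
noncomputable def xi {n : ℕ} (i : Fin n) : ExtA n := emon {Sum.inr i}

/-- The sign `(-1)^{#inversions}` obtained when concatenating the sorted monomial on `S`
with the sorted monomial on `T` and re-sorting. -/
noncomputable def msign {n : ℕ} (S T : Finset (Gen n)) : ℂ :=
  (-1 : ℂ) ^ (((S ×ˢ T).filter (fun p => gidx p.2 < gidx p.1)).card)

/-- Multiplication in the exterior algebra `∧{Θ_n, Ξ_n}`. -/
noncomputable def emul {n : ℕ} (f g : ExtA n) : ExtA n :=
  fun U => ∑ S ∈ U.powerset, msign S (U \ S) * f S * g (U \ S)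

/-- The inner product on `∧{Θ_n, Ξ_n}` making the monomials `θ_S · ξ_T` orthonormal. -/
noncomputable def einner {n : ℕ} (f g : ExtA n) : ℂ :=
  ∑ S : Finset (Gen n), f S * g S

/-- The contraction (exterior differentiation) action `f ⊙ h`: on generators,
`ω_i ⊙ (ω_{j_1} ⋯ ω_{j_r})` removes `ω_i` with the sign `(-1)^{s-1}` if `j_s = i`
and gives `0` otherwise, extended bilinearly (on a monomial `ω_S`, it is the
composite of the single contractions). -/
noncomputable def odot {n : ℕ} (f h : ExtA n) : ExtA n :=
  fun T => ∑ S : Finset (Gen n), if Disjoint S T then msign S T * f S * h (S ∪ T) else 0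

/-- The sign produced when the permutation `w` reorders the (sorted) monomial on `S`. -/
noncomputable def actsign {n : ℕ} (w : Equiv.Perm (Fin n)) (S : Finset (Gen n)) : ℂ :=
  (-1 : ℂ) ^ (((S ×ˢ S).filter (fun p =>
      gidx p.1 < gidx p.2 ∧
        gidx (Equiv.sumCongr w w p.2) < gidx (Equiv.sumCongr w w p.1))).card)

/-- The diagonal action of a permutation `w ∈ S_n` on `∧{Θ_n, Ξ_n}`:
`w · θ_i = θ_{w(i)}`, `w · ξ_i = ξ_{w(i)}`, extended as an algebra automorphism. -/
noncomputable def pact {n : ℕ} (w : Equiv.Perm (Fin n)) (f : ExtA n) : ExtA n :=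
  fun T =>
    actsign w (T.map (Equiv.sumCongr w w).symm.toEmbedding) *
      f (T.map (Equiv.sumCongr w w).symm.toEmbedding)

/-- The block operator `ρ_B`: for `|B| > 1`, `ρ_B(f) = ∑_{i ≠ j ∈ B} ξ_i · (θ_j ⊙ f)`;
for `B = {i}`, `ρ_B(f) = ξ_i · (θ_i ⊙ f)`. -/
noncomputable def rho {n : ℕ} (B : Finset (Fin n)) (f : ExtA n) : ExtA n :=
  if 1 < B.card then
    ∑ i ∈ B, ∑ j ∈ B.erase i, emul (xi i) (odot (theta j) f)
  else
    ∑ i ∈ B, emul (xi i) (odot (theta i) f)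

/-- The operator `ψ_B`, equal to `ρ_B` when `|B| > 1` and `0` when `|B| ≤ 1`. -/
noncomputable def psi {n : ℕ} (B : Finset (Fin n)) (f : ExtA n) : ExtA n :=
  if 1 < B.card then rho B f else 0

/-- The two-set operator `ψ_{A,B}(f) = ∑_{a ∈ A, b ∈ B} [ξ_a·(θ_b ⊙ f) + ξ_b·(θ_a ⊙ f)]`. -/
noncomputable def psiPair {n : ℕ} (A B : Finset (Fin n)) (f : ExtA n) : ExtA n :=
  ∑ a ∈ A, ∑ b ∈ B, (emul (xi a) (odot (theta b) f) + emul (xi b) (odot (theta a) f))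

/-- A set partition of `[n]` is noncrossing if whenever `a < b < c < d` with `a,c` in a
block `B` and `b,d` in a block `C`, then `B = C`. -/
def Noncrossing {n : ℕ} (π : Finpartition (Finset.univ : Finset (Fin n))) : Prop :=
  ∀ B ∈ π.parts, ∀ C ∈ π.parts, ∀ a b c d : Fin n,
    a < b → b < c → c < d → a ∈ B → c ∈ B → b ∈ C → d ∈ C → B = C

/-- The composite operator `ρ_π = ρ_{B_1} ∘ ⋯ ∘ ρ_{B_k}` over the blocks of `π`
(the order of composition is immaterial since block operators commute). -/
noncomputable def rhoPartition {n : ℕ} (π : Finpartition (Finset.univ : Finset (Fin n))) :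
    ExtA n → ExtA n :=
  π.parts.toList.foldr (fun B g => rho B ∘ g) id

/-- The top monomial `θ_1 θ_2 ⋯ θ_n`. -/
noncomputable def topTheta (n : ℕ) : ExtA n :=
  emon ((Finset.univ : Finset (Fin n)).image Sum.inl)

/-- The fermion `F_π := ρ_π(θ_1 θ_2 ⋯ θ_n)` attached to a set partition `π` of `[n]`. -/
noncomputable def Fperm {n : ℕ} (π : Finpartition (Finset.univ : Finset (Fin n))) : ExtA n :=
  rhoPartition π (topTheta n)

/-- The fermion `f_π := (ξ_1 + ⋯ + ξ_n) ⊙ F_π`. -/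
noncomputable def fperm {n : ℕ} (π : Finpartition (Finset.univ : Finset (Fin n))) : ExtA n :=
  odot (∑ i : Fin n, xi i) (Fperm π)

section Pairing

variable {R ι : Type*} [Ring R] (x d : ι → R)

def pairOp (a b : ι) : R := x a * d b + x b * d a

def pairSumOp (A B : Finset ι) : R := ∑ a ∈ A, ∑ b ∈ B, pairOp x d a b

variable {x d}

theorem pairOp_mul_pairOp (hxd : ∀ a b, x a * d b = -(d b * x a)) (a b c e : ι) :
    pairOp x d a b * pairOp x d c e =
      -(x a * x c * (d b * d e) + x a * x e * (d b * d c)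
        + x b * x c * (d a * d e) + x b * x e * (d a * d c)) := by
  have hmid : ∀ a b c e, x a * d b * (x c * d e) = -(x a * x c * (d b * d e)) := by
    intro a b c e
    have hswap : d b * x c = -(x c * d b) := by rw [hxd c b, neg_neg]
    calc x a * d b * (x c * d e) = x a * (d b * x c) * d e := by simp only [mul_assoc]
      _ = -(x a * x c * (d b * d e)) := by rw [hswap]; noncomm_ring
  simp only [pairOp, add_mul, mul_add, hmid]
  abel

theorem pairOp_cyclic (hx : ∀ a c, x a * x c = -(x c * x a))
    (hd : ∀ b e, d b * d e = -(d e * d b)) (hxd : ∀ a b, x a * d b = -(d b * x a))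
    (i j s t : ι) :
    pairOp x d i s * pairOp x d j t + pairOp x d i j * pairOp x d s t
      + pairOp x d i t * pairOp x d j s = 0 := by
  simp only [pairOp_mul_pairOp hxd]
  rw [hx s j, hx t j, hx t s, hd s j, hd t j, hd t s]
  simp only [neg_mul, mul_neg]
  abel

theorem pairSumOp_cyclic (hx : ∀ a c, x a * x c = -(x c * x a))
    (hd : ∀ b e, d b * d e = -(d e * d b)) (hxd : ∀ a b, x a * d b = -(d b * x a))
    (I J S T : Finset ι) :
    pairSumOp x d I S * pairSumOp x d J T + pairSumOp x d I J * pairSumOp x d S T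
      + pairSumOp x d I T * pairSumOp x d J S = 0 := by
  have e₁ : pairSumOp x d I S * pairSumOp x d J T =
      ∑ i ∈ I, ∑ j ∈ J, ∑ s ∈ S, ∑ t ∈ T, pairOp x d i s * pairOp x d j t := by
    simp only [pairSumOp, sum_mul_sum]
  have e₂ : pairSumOp x d I J * pairSumOp x d S T =
      ∑ i ∈ I, ∑ j ∈ J, ∑ s ∈ S, ∑ t ∈ T, pairOp x d i j * pairOp x d s t := by
    simp only [pairSumOp, sum_mul_sum]
    exact sum_congr rfl fun i _ => sum_comm
  have e₃ : pairSumOp x d I T * pairSumOp x d J S =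
      ∑ i ∈ I, ∑ j ∈ J, ∑ s ∈ S, ∑ t ∈ T, pairOp x d i t * pairOp x d j s := by
    simp only [pairSumOp, sum_mul_sum]
    exact sum_congr rfl fun i _ => sum_congr rfl fun j _ => sum_comm
  rw [e₁, e₂, e₃]
  simp only [← sum_add_distrib]
  exact sum_eq_zero fun i _ => sum_eq_zero fun j _ => sum_eq_zero fun s _ =>
    sum_eq_zero fun t _ => pairOp_cyclic hx hd hxd i j s t

end Pairing

theorem gidx_injective {n : ℕ} : Function.Injective (gidx : Gen n → ℕ) := by
  rintro (i | i) (j | j) h <;> simp only [gidx] at h <;> first | omega | simp [Fin.ext_iff]; omega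

noncomputable def orderSign {n : ℕ} (x : Gen n) (T : Finset (Gen n)) : ℂ :=
  (-1) ^ #{y ∈ T | gidx y < gidx x}

noncomputable def pairSign {n : ℕ} (x y : Gen n) : ℂ :=
  if gidx x < gidx y then -1 else 1

theorem pairSign_swap {n : ℕ} {x y : Gen n} (h : x ≠ y) : pairSign y x = -pairSign x y := by
  have hne : gidx x ≠ gidx y := gidx_injective.ne h
  unfold pairSign
  rcases hne.lt_or_gt with hlt | hlt <;> simp [hlt, hlt.not_gt]

theorem pairSign_sq {n : ℕ} (x y : Gen n) : pairSign x y ^ 2 = 1 := by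
  unfold pairSign
  split_ifs <;> norm_num

theorem orderSign_insert {n : ℕ} {x : Gen n} {T : Finset (Gen n)} (hx : x ∉ T) (y : Gen n) :
    orderSign y (insert x T) = pairSign x y * orderSign y T := by
  unfold orderSign pairSign
  rw [filter_insert]
  split_ifs with h
  · rw [card_insert_of_notMem (by simp [hx]), pow_succ]
    ring
  · ring

theorem orderSign_eq_of_mem {n : ℕ} {x : Gen n} {T : Finset (Gen n)} (hx : x ∈ T) (y : Gen n) :
    orderSign y T = pairSign x y * orderSign y (T.erase x) := by
  conv_lhs => rw [← insert_erase hx]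
  exact orderSign_insert (notMem_erase x T) y

theorem orderSign_erase_self {n : ℕ} (x : Gen n) (T : Finset (Gen n)) :
    orderSign x (T.erase x) = orderSign x T := by
  by_cases hx : x ∈ T
  · simp [orderSign_eq_of_mem hx x, pairSign]
  · rw [erase_eq_of_notMem hx]

noncomputable def creationOp {n : ℕ} (x : Gen n) : Module.End ℂ (ExtA n) where
  toFun g U := if x ∈ U then orderSign x U * g (U.erase x) else 0
  map_add' g h := by ext U; simp only [Pi.add_apply]; split_ifs <;> ring
  map_smul' c g := by
    ext U; simp only [Pi.smul_apply, smul_eq_mul, RingHom.id_apply]; split_ifs <;> ring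

noncomputable def annihilationOp {n : ℕ} (x : Gen n) : Module.End ℂ (ExtA n) where
  toFun g T := if x ∈ T then 0 else orderSign x T * g (insert x T)
  map_add' g h := by ext U; simp only [Pi.add_apply]; split_ifs <;> ring
  map_smul' c g := by
    ext U; simp only [Pi.smul_apply, smul_eq_mul, RingHom.id_apply]; split_ifs <;> ring

theorem creationOp_apply {n : ℕ} (x : Gen n) (g : ExtA n) (U : Finset (Gen n)) :
    creationOp x g U = if x ∈ U then orderSign x U * g (U.erase x) else 0 := rfl

theorem annihilationOp_apply {n : ℕ} (x : Gen n) (g : ExtA n) (T : Finset (Gen n)) :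
    annihilationOp x g T = if x ∈ T then 0 else orderSign x T * g (insert x T) := rfl

theorem msign_singleton {n : ℕ} (x : Gen n) (T : Finset (Gen n)) :
    msign {x} T = orderSign x T := by
  unfold msign orderSign
  rw [singleton_product, filter_map, card_map]
  rfl

theorem emul_xi {n : ℕ} (a : Fin n) (g : ExtA n) : emul (xi a) g = creationOp (.inr a) g := by
  ext U
  simp only [emul, xi, emon, creationOp_apply, mul_ite, ite_mul, mul_one, mul_zero, zero_mul,
    sum_ite_eq', mem_powerset, singleton_subset_iff, msign_singleton, sdiff_singleton_eq_erase,
    orderSign_erase_self]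

theorem odot_theta {n : ℕ} (b : Fin n) (g : ExtA n) :
    odot (theta b) g = annihilationOp (.inl b) g := by
  ext T
  rw [odot, sum_eq_single_of_mem {Sum.inl b} (mem_univ _) fun S _ hS => by simp [theta, emon, hS]]
  simp only [theta, emon, if_true, mul_one, disjoint_singleton_left, msign_singleton,
    ← insert_eq, annihilationOp_apply]
  split_ifs <;> rfl

theorem creationOp_anticomm {n : ℕ} (x y : Gen n) :
    creationOp x * creationOp y = -(creationOp y * creationOp x) := by
  refine LinearMap.ext fun g => funext fun U => ?_
  simp only [Module.End.mul_apply, LinearMap.neg_apply, Pi.neg_apply, creationOp_apply, mem_erase]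
  by_cases hxy : x = y
  · subst hxy
    simp
  by_cases hx : x ∈ U <;> by_cases hy : y ∈ U <;> simp only [hx, hy, hxy, Ne.symm hxy, Ne,
    not_false_eq_true, and_self, and_false, if_true, if_false, mul_zero, neg_zero]
  rw [orderSign_eq_of_mem hy x, orderSign_eq_of_mem hx y, erase_right_comm, pairSign_swap hxy]
  ring

theorem annihilationOp_anticomm {n : ℕ} (x y : Gen n) :
    annihilationOp x * annihilationOp y = -(annihilationOp y * annihilationOp x) := by
  refine LinearMap.ext fun g => funext fun T => ?_
  simp only [Module.End.mul_apply, LinearMap.neg_apply, Pi.neg_apply, annihilationOp_apply,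
    mem_insert]
  by_cases hxy : x = y
  · subst hxy
    simp
  by_cases hx : x ∈ T <;> by_cases hy : y ∈ T <;> simp only [hx, hy, hxy, Ne.symm hxy,
    or_self, or_true, if_true, if_false, mul_zero, neg_zero]
  rw [orderSign_insert hx y, orderSign_insert hy x, insert_comm, pairSign_swap hxy]
  ring

theorem creationOp_annihilationOp_anticomm {n : ℕ} {x y : Gen n} (hxy : x ≠ y) :
    creationOp x * annihilationOp y = -(annihilationOp y * creationOp x) := by
  refine LinearMap.ext fun g => funext fun U => ?_
  simp only [Module.End.mul_apply, LinearMap.neg_apply, Pi.neg_apply, creationOp_apply,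
    annihilationOp_apply, mem_erase, mem_insert]
  by_cases hx : x ∈ U <;> by_cases hy : y ∈ U <;> simp only [hx, hy, hxy, Ne.symm hxy, Ne,
    not_false_eq_true, and_self, and_false, or_true, or_false, if_true, if_false, mul_zero,
    neg_zero]
  rw [orderSign_insert hy x, orderSign_eq_of_mem hx y, erase_insert_of_ne (Ne.symm hxy),
    pairSign_swap hxy]
  linear_combination -(orderSign x U * orderSign y (U.erase x) * g (insert y (U.erase x))) *
    pairSign_sq x y

theorem psiPair_eq_pairSumOp {n : ℕ} (A B : Finset (Fin n)) (f : ExtA n) :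
    psiPair A B f =
      pairSumOp (fun a => creationOp (.inr a)) (fun b => annihilationOp (.inl b)) A B f := by
  simp only [psiPair, pairSumOp, pairOp, LinearMap.sum_apply, LinearMap.add_apply,
    Module.End.mul_apply, emul_xi, odot_theta]

theorem psiPair_annihilate_general (n : ℕ) (I J S T : Finset (Fin n)) (f : ExtA n) :
    psiPair I S (psiPair J T f) + psiPair I J (psiPair S T f)
      + psiPair I T (psiPair J S f) = 0 := by
  have hcyclic := pairSumOp_cyclic (fun a c => creationOp_anticomm (.inr a) (.inr c))
    (fun b e => annihilationOp_anticomm (.inl b) (.inl e))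
    (fun a b => creationOp_annihilationOp_anticomm Sum.inr_ne_inl) I J S T
  simpa only [psiPair_eq_pairSumOp, LinearMap.add_apply, Module.End.mul_apply,
    LinearMap.zero_apply] using congrArg (· f) hcyclic

/-- Mixed-pair operators annihilate via antisymmetry: for pairwise disjoint
`I, J, S, T ⊆ [n]`, `ψ_{I,S}∘ψ_{J,T} + ψ_{I,J}∘ψ_{S,T} + ψ_{I,T}∘ψ_{J,S} = 0`. -/
theorem psiPair_annihilate (n : ℕ) (I J S T : Finset (Fin n))
    (hIJ : Disjoint I J) (hIS : Disjoint I S) (hIT : Disjoint I T)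
    (hJS : Disjoint J S) (hJT : Disjoint J T) (hST : Disjoint S T) (f : ExtA n) :
    psiPair I S (psiPair J T f) + psiPair I J (psiPair S T f)
      + psiPair I T (psiPair J S f) = 0 :=
  psiPair_annihilate_general n I J S T f
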